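/- In the Pa^c(σ,γ) model, for every i ∈ {1,…,n} and every q ∈ [0,1), the Value-at-Risk of X_i at level q satisfies VaR_q[X_i] := inf{ x ∈ ℝ : ν{X_i ≤ x} ≥ q } = σ_i·((1−q)^{−1/γ*_i} − 1), where γ*_i = ∑_{j=1}^{n+1} c_{i,j}γ_j. -/

import Mathlib

/-!
Conditionally on `y`, the event `X_i > x` (for `x ≥ 0`) says that the exponential variable `λ_i`
exceeds `(x / σ_i) ∑_j c_{i,j} y_j`, which has probability `exp (-(x / σ_i) ∑_j c_{i,j} y_j)`.
Averaging over the independent Gamma variables `y_j` factors into Laplace transforms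
`(1 + x / σ_i)^{-γ_j}`, one for each `j` with `c_{i,j} = 1`. Hence `X_i` has the Lomax survival
function `(1 + x / σ_i)^{-γ*_i}` on `[0, ∞)`, and the quantile is obtained by inverting it.
-/

open MeasureTheory ProbabilityTheory Real

/-- The `Pa^c(σ,γ)` model measure. -/
noncomputable def paretoModelMeasure (n : ℕ) (γ : Fin (n + 1) → ℝ) :
    Measure ((Fin n → ℝ) × (Fin (n + 1) → ℝ)) :=
  (Measure.pi fun _ : Fin n => gammaMeasure 1 1).prod
    (Measure.pi fun j => gammaMeasure (γ j) 1)

/-- The coordinates `X_i(λ,y) = σ_i λ_i / ∑_j c_{i,j} y_j`. -/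
noncomputable def paretoCoord (n : ℕ) (σ : Fin n → ℝ) (c : Fin n → Fin (n + 1) → ℝ)
    (i : Fin n) (p : (Fin n → ℝ) × (Fin (n + 1) → ℝ)) : ℝ :=
  σ i * p.1 i / ∑ j, c i j * p.2 j

open scoped ENNReal

theorem lintegral_pi_prod_eq_prod {ι : Type*} [Fintype ι] {Ω : ι → Type*}
    [∀ j, MeasurableSpace (Ω j)] (μ : ∀ j, Measure (Ω j)) [∀ j, IsProbabilityMeasure (μ j)]
    {f : ∀ j, Ω j → ℝ≥0∞} (hf : ∀ j, Measurable (f j)) :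
    ∫⁻ ω, ∏ j, f j (ω j) ∂Measure.pi μ = ∏ j, ∫⁻ x, f j x ∂μ j := by
  rw [lintegral_prod_eq_prod_lintegral_of_indepFun _ _
    (iIndepFun_pi (X := f) fun j => (hf j).aemeasurable)
    fun j => (hf j).comp (measurable_pi_apply j)]
  exact Finset.prod_congr rfl fun j _ => (measurePreserving_eval μ j).lintegral_comp (hf j)

theorem lintegral_exp_neg_mul_gammaMeasure {a r t : ℝ} (ha : 0 < a) (hr : 0 < r)
    (hrt : 0 < r + t) :
    ∫⁻ y, ENNReal.ofReal (exp (-(t * y))) ∂gammaMeasure a r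
      = ENNReal.ofReal ((1 + t / r) ^ (-a)) := by
  have hpdf : ∀ s, Measurable (gammaPDF a s) := fun s =>
    (measurable_gammaPDFReal a s).ennreal_ofReal
  have hscale : r + t = r * (1 + t / r) := by field_simp
  have h1 : 0 < 1 + t / r := by rw [hscale] at hrt; exact pos_of_mul_pos_right hrt hr.le
  have htilt : ∀ y, gammaPDF a r y * ENNReal.ofReal (exp (-(t * y)))
      = ENNReal.ofReal ((1 + t / r) ^ (-a)) * gammaPDF a (r + t) y := by
    intro y
    rcases lt_or_ge y 0 with hy | hy
    · simp only [gammaPDF_of_neg hy, zero_mul, mul_zero]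
    · rw [gammaPDF_of_nonneg hy, gammaPDF_of_nonneg hy, ← ENNReal.ofReal_mul (by positivity),
        ← ENNReal.ofReal_mul (by positivity)]
      congr 1
      rw [hscale, mul_rpow hr.le h1.le, rpow_neg h1.le, show -(r * (1 + t / r) * y)
        = -(r * y) + -(t * y) by field_simp; ring, exp_add]
      field_simp
  rw [gammaMeasure, lintegral_withDensity_eq_lintegral_mul _ (hpdf r) (by fun_prop)]
  simp only [Pi.mul_apply, htilt]
  rw [lintegral_const_mul _ (hpdf _), lintegral_gammaPDF_eq_one ha hrt, mul_one]

theorem lintegral_exp_neg_sum_pi_gammaMeasure {ι : Type*} [Fintype ι] {a r t : ι → ℝ}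
    (ha : ∀ j, 0 < a j) (hr : ∀ j, 0 < r j) (hrt : ∀ j, 0 < r j + t j) :
    ∫⁻ y, ENNReal.ofReal (exp (-∑ j, t j * y j))
        ∂Measure.pi (fun j => gammaMeasure (a j) (r j))
      = ENNReal.ofReal (∏ j, (1 + t j / r j) ^ (-a j)) := by
  have := fun j => isProbabilityMeasure_gammaMeasure (ha j) (hr j)
  have hsplit : ∀ y : ι → ℝ, ENNReal.ofReal (exp (-∑ j, t j * y j))
      = ∏ j, ENNReal.ofReal (exp (-(t j * y j))) := by
    intro y
    rw [← Finset.sum_neg_distrib, exp_sum, ENNReal.ofReal_prod_of_nonneg fun j _ => (exp_pos _).le]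
  simp only [hsplit]
  rw [lintegral_pi_prod_eq_prod _ (f := fun j x => ENNReal.ofReal (exp (-(t j * x))))
    fun j => by fun_prop, ENNReal.ofReal_prod_of_nonneg]
  · exact Finset.prod_congr rfl fun j _ => lintegral_exp_neg_mul_gammaMeasure (ha j) (hr j) (hrt j)
  · intro j _
    have : 0 < 1 + t j / r j := by
      have := div_pos (hrt j) (hr j); rwa [add_div, div_self (hr j).ne'] at this
    positivity

theorem gammaMeasure_Iic_zero (a r : ℝ) : gammaMeasure a r (Set.Iic 0) = 0 := by
  rw [gammaMeasure, withDensity_apply _ measurableSet_Iic,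
    ← setLIntegral_congr Iio_ae_eq_Iic, lintegral_gammaPDF_of_nonpos le_rfl]

theorem ae_pos_gammaMeasure (a r : ℝ) : ∀ᵐ y ∂gammaMeasure a r, 0 < y := by
  simpa [ae_iff, not_lt, Set.Iic_def] using gammaMeasure_Iic_zero a r

theorem ae_pos_pi_gammaMeasure {ι : Type*} [Fintype ι] {a r : ι → ℝ}
    (ha : ∀ j, 0 < a j) (hr : ∀ j, 0 < r j) :
    ∀ᵐ y ∂Measure.pi (fun j => gammaMeasure (a j) (r j)), ∀ j, 0 < y j := by
  have := fun j => isProbabilityMeasure_gammaMeasure (ha j) (hr j)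
  exact ae_all_iff.2 fun j =>
    (measurePreserving_eval _ j).quasiMeasurePreserving.ae (ae_pos_gammaMeasure _ _)

theorem expMeasure_Ioi {r T : ℝ} (hr : 0 < r) (hT : 0 ≤ T) :
    expMeasure r (Set.Ioi T) = ENNReal.ofReal (exp (-(r * T))) := by
  have := isProbabilityMeasure_expMeasure hr
  rw [← ofReal_measureReal, ← Set.compl_Iic, measureReal_compl measurableSet_Iic,
    probReal_univ, ← cdf_eq_real, cdf_expMeasure_eq hr, if_pos hT, sub_sub_cancel]

theorem sum_mul_pos_of_zero_or_one {ι : Type*} [Fintype ι] {c y : ι → ℝ}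
    (hc : ∀ j, c j = 0 ∨ c j = 1) (hrow : ∃ j, c j = 1) (hy : ∀ j, 0 < y j) :
    0 < ∑ j, c j * y j := by
  obtain ⟨j₀, hj₀⟩ := hrow
  refine Finset.sum_pos' (fun j _ => ?_) ⟨j₀, Finset.mem_univ _, by simp [hj₀, hy j₀]⟩
  rcases hc j with h | h <;> simp [h, (hy j).le]

theorem le_one_sub_one_add_div_rpow_neg_iff {σ a q x : ℝ} (hσ : 0 < σ) (ha : 0 < a)
    (hq : q < 1) (hx : 0 ≤ x) :
    q ≤ 1 - (1 + x / σ) ^ (-a) ↔ σ * ((1 - q) ^ (-(1 / a)) - 1) ≤ x := by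
  have h1x : 0 < 1 + x / σ := by positivity
  calc q ≤ 1 - (1 + x / σ) ^ (-a) ↔ (1 + x / σ) ^ (-a) ≤ 1 - q := by
        constructor <;> intro <;> linarith
    _ ↔ (1 - q) ^ (-a)⁻¹ ≤ 1 + x / σ :=
        (rpow_inv_le_iff_of_neg (sub_pos.2 hq) h1x (neg_lt_zero.2 ha)).symm
    _ ↔ σ * ((1 - q) ^ (-(1 / a)) - 1) ≤ x := by
        rw [inv_neg, one_div, ← sub_le_iff_le_add', le_div_iff₀ hσ, mul_comm]

section ParetoModel

variable {n : ℕ} {σ : Fin n → ℝ} {γ : Fin (n + 1) → ℝ} {c : Fin n → Fin (n + 1) → ℝ}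

theorem isProbabilityMeasure_paretoModelMeasure (hγ : ∀ j, 0 < γ j) :
    IsProbabilityMeasure (paretoModelMeasure n γ) := by
  have := fun j => isProbabilityMeasure_gammaMeasure (hγ j) one_pos
  have := isProbabilityMeasure_gammaMeasure one_pos one_pos
  unfold paretoModelMeasure
  infer_instance

theorem measurable_paretoCoord (i : Fin n) : Measurable (paretoCoord n σ c i) := by
  unfold paretoCoord
  fun_prop

theorem paretoModelMeasure_lt_paretoCoord {i : Fin n} (hσ : 0 < σ i) (hγ : ∀ j, 0 < γ j)
    (hc : ∀ j, c i j = 0 ∨ c i j = 1) (hrow : ∃ j, c i j = 1) {x : ℝ} (hx : 0 ≤ x) :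
    paretoModelMeasure n γ {p | x < paretoCoord n σ c i p}
      = ENNReal.ofReal ((1 + x / σ i) ^ (-∑ j, c i j * γ j)) := by
  have := isProbabilityMeasure_gammaMeasure one_pos one_pos
  have := fun j => isProbabilityMeasure_gammaMeasure (hγ j) one_pos
  set τ := x / σ i
  have hτ : 0 ≤ τ := by positivity
  have hsection : ∀ᵐ y ∂Measure.pi (fun j => gammaMeasure (γ j) 1),
      Measure.pi (fun _ => gammaMeasure 1 1) ((fun l => (l, y)) ⁻¹' {p | x < paretoCoord n σ c i p})
        = ENNReal.ofReal (exp (-∑ j, τ * c i j * y j)) := by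
    filter_upwards [ae_pos_pi_gammaMeasure hγ fun _ => one_pos] with y hy
    have hS := sum_mul_pos_of_zero_or_one hc hrow hy
    have hpre : (fun l => (l, y)) ⁻¹' {p | x < paretoCoord n σ c i p}
        = Function.eval i ⁻¹' Set.Ioi (τ * ∑ j, c i j * y j) := by
      ext l
      simp only [Set.mem_preimage, Set.mem_ofPred_eq, paretoCoord, Function.eval, Set.mem_Ioi]
      rw [lt_div_iff₀ hS, div_mul_eq_mul_div, div_lt_iff₀ hσ, mul_comm (l i)]
    rw [hpre, (measurePreserving_eval _ i).measure_preimage measurableSet_Ioi.nullMeasurableSet,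
      ← expMeasure, expMeasure_Ioi one_pos (by positivity), Finset.mul_sum]
    simp only [one_mul, mul_assoc]
  rw [paretoModelMeasure, Measure.prod_apply_symm
      (measurableSet_lt measurable_const (measurable_paretoCoord i)),
    lintegral_congr_ae hsection,
    lintegral_exp_neg_sum_pi_gammaMeasure hγ (fun _ => one_pos)
      fun j => by rcases hc j with h | h <;> simp [h, add_pos_of_pos_of_nonneg one_pos hτ],
    ← Finset.sum_neg_distrib, rpow_sum_of_pos (by positivity)]
  refine congrArg ENNReal.ofReal (Finset.prod_congr rfl fun j _ => ?_)
  rcases hc j with h | h <;> simp [h, τ]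

theorem paretoModelMeasure_paretoCoord_le {i : Fin n} (hσ : 0 < σ i) (hγ : ∀ j, 0 < γ j)
    (hc : ∀ j, c i j = 0 ∨ c i j = 1) (hrow : ∃ j, c i j = 1) {x : ℝ} (hx : 0 ≤ x) :
    (paretoModelMeasure n γ {p | paretoCoord n σ c i p ≤ x}).toReal
      = 1 - (1 + x / σ i) ^ (-∑ j, c i j * γ j) := by
  have := isProbabilityMeasure_paretoModelMeasure hγ
  have hcompl : {p | paretoCoord n σ c i p ≤ x} = {p | x < paretoCoord n σ c i p}ᶜ := by
    ext; simp
  rw [← measureReal_def, hcompl, measureReal_compl (measurableSet_lt measurable_const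
      (measurable_paretoCoord i)), probReal_univ, measureReal_def,
    paretoModelMeasure_lt_paretoCoord hσ hγ hc hrow hx, ENNReal.toReal_ofReal (by positivity)]

theorem paretoModelMeasure_paretoCoord_le_of_neg {i : Fin n} (hσ : 0 < σ i)
    (hγ : ∀ j, 0 < γ j) (hc : ∀ j, c i j = 0 ∨ c i j = 1) (hrow : ∃ j, c i j = 1) {x : ℝ}
    (hx : x < 0) : (paretoModelMeasure n γ {p | paretoCoord n σ c i p ≤ x}).toReal = 0 := by
  have := isProbabilityMeasure_paretoModelMeasure hγ
  refine le_antisymm ?_ ENNReal.toReal_nonneg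
  calc (paretoModelMeasure n γ {p | paretoCoord n σ c i p ≤ x}).toReal
      ≤ (paretoModelMeasure n γ {p | paretoCoord n σ c i p ≤ 0}).toReal :=
        measureReal_mono fun p (hp : _ ≤ x) => hp.trans hx.le
    _ = 0 := by simp [paretoModelMeasure_paretoCoord_le hσ hγ hc hrow le_rfl]

end ParetoModel

theorem value_at_risk_pareto_general
    (n : ℕ)
    (σ : Fin n → ℝ) (hσ : ∀ i, 0 < σ i)
    (γ : Fin (n + 1) → ℝ) (hγ : ∀ j, 0 < γ j)
    (c : Fin n → Fin (n + 1) → ℝ) (hc : ∀ i j, c i j = 0 ∨ c i j = 1)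
    (hrow : ∀ i, ∃ j, c i j = 1)
    (i : Fin n) (γs : ℝ) (hγs : γs = ∑ j, c i j * γ j)
    (q : ℝ) (hq : q ∈ Set.Ico (0 : ℝ) 1) :
    sInf {x : ℝ |
        q ≤ (paretoModelMeasure n γ {p | paretoCoord n σ c i p ≤ x}).toReal}
      = σ i * ((1 - q) ^ (-(1 / γs)) - 1) := by
  obtain ⟨hq₀, hq₁⟩ := hq
  have hγs_pos : 0 < γs := hγs ▸ sum_mul_pos_of_zero_or_one (hc i) (hrow i) hγ
  rcases hq₀.eq_or_lt with rfl | hq_pos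
  -- At `q = 0` the set is all of `ℝ`, whose `sInf` is `0` by convention.
  · simp
  have hVaR_pos : 0 < σ i * ((1 - q) ^ (-(1 / γs)) - 1) := by
    exact mul_pos (hσ i) (sub_pos.2 (one_lt_rpow_of_pos_of_lt_one_of_neg (by linarith)
      (by linarith) (neg_lt_zero.2 (one_div_pos.2 hγs_pos))))
  suffices {x : ℝ | q ≤ (paretoModelMeasure n γ {p | paretoCoord n σ c i p ≤ x}).toReal}
      = Set.Ici (σ i * ((1 - q) ^ (-(1 / γs)) - 1)) by rw [this, csInf_Ici]
  ext x
  rcases lt_or_ge x 0 with hx | hx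
  · simp only [Set.mem_ofPred_eq, Set.mem_Ici,
      paretoModelMeasure_paretoCoord_le_of_neg (hσ i) hγ (hc i) (hrow i) hx]
    constructor <;> intro <;> linarith
  · rw [Set.mem_ofPred_eq, paretoModelMeasure_paretoCoord_le (hσ i) hγ (hc i) (hrow i) hx, ← hγs]
    exact le_one_sub_one_add_div_rpow_neg_iff (hσ i) hγs_pos hq₁ hx

/-- the Value-at-Risk of `X_i` at level `q` is
`VaR_q[X_i] = σ_i ((1-q)^{-1/γ*_i} - 1)`. -/
theorem value_at_risk_pareto
    (n : ℕ) (hn : 1 ≤ n)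
    (σ : Fin n → ℝ) (hσ : ∀ i, 0 < σ i)
    (γ : Fin (n + 1) → ℝ) (hγ : ∀ j, 0 < γ j)
    (c : Fin n → Fin (n + 1) → ℝ) (hc : ∀ i j, c i j = 0 ∨ c i j = 1)
    (hrow : ∀ i, ∃ j, c i j = 1)
    (i : Fin n) (γs : ℝ) (hγs : γs = ∑ j, c i j * γ j)
    (q : ℝ) (hq : q ∈ Set.Ico (0 : ℝ) 1) :
    sInf {x : ℝ |
        q ≤ (paretoModelMeasure n γ {p | paretoCoord n σ c i p ≤ x}).toReal}
      = σ i * ((1 - q) ^ (-(1 / γs)) - 1) :=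
  value_at_risk_pareto_general n σ hσ γ hγ c hc hrow i γs hγs q hq
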